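/- Let n ≥ 3 be an integer, m = (n−2)/(n+2), ρ ∈ {1, 0, −1}, β ≥ 0 with γ = (2β+ρ)/(1−m) > 0. If u₁ and u₂ are two positive smooth radially symmetric solutions of ((n−1)/m)·Δ(u^m) + β·(x·∇u) + γ·u = 0 on ℝⁿ with u₁(0) = u₂(0), then u₁ = u₂ on all of ℝⁿ; that is, radially symmetric gradient Yamabe solitons are uniquely determined by the value of the conformal factor at the origin. -/

import Mathlib

open Real MeasureTheory Metric
open scoped Topology RealInnerProductSpace

noncomputable section

/-- Euclidean space ℝⁿ. -/
abbrev Euc (n : ℕ) := EuclideanSpace ℝ (Fin n)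

/-- Euclidean Laplacian: sum of pure second derivatives in the coordinate directions. -/
def lap {n : ℕ} (f : Euc n → ℝ) (x : Euc n) : ℝ :=
  ∑ i : Fin n, fderiv ℝ (fun y => fderiv ℝ f y (EuclideanSpace.single i 1)) x
    (EuclideanSpace.single i 1)

/-- The conformally flat Yamabe soliton equation
`((n-1)/m)·Δ(u^m) + β·(x·∇u) + γ·u = 0` on ℝⁿ. -/
def YamabePDE {n : ℕ} (m β γ : ℝ) (u : Euc n → ℝ) : Prop :=
  ∀ x : Euc n, ((n : ℝ) - 1) / m * lap (fun y => u y ^ m) x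
      + β * ⟪x, gradient u x⟫ + γ * u x = 0

/-- A function on ℝⁿ is radially symmetric if it depends only on the norm. -/
def IsRadial {n : ℕ} (u : Euc n → ℝ) : Prop :=
  ∀ x y : Euc n, ‖x‖ = ‖y‖ → u x = u y

/-- Scalar curvature of the conformally flat metric g = u^{4/(n+2)}·dx²:
`R = -(4(n-1)/(n-2))·u⁻¹·Δ(u^m)`. -/
def scalarCurv {n : ℕ} (m : ℝ) (u : Euc n → ℝ) (x : Euc n) : ℝ :=
  -(4 * ((n : ℝ) - 1) / ((n : ℝ) - 2)) * lap (fun y => u y ^ m) x / u x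

/-!
Along a ray `t ↦ t • eᵢ`, a radial solution `u` has profile `φ`, and `Φ = φ ^ m` solves the
singular ODE `(t ^ (n-1) Φ')' = t ^ (n-1) F(t, Φ, Φ')` with `F` smooth where `Φ > 0`, and
`Φ'(0) = 0` because the profile is even. For two solutions with the same `Φ(0)`, integrating from
`0` gives `t ^ (n-1) |ΔΦ'(t)| ≤ ∫₀ᵗ τ ^ (n-1) |ΔF| ≤ t ^ (n-1) ∫₀ᵗ |ΔF|`, so the singular weight
cancels. As `F` is Lipschitz on the compact set swept out by both trajectories over `[0, R]`,
`D = |ΔΦ| + |ΔΦ'|` satisfies `D(t) ≤ C ∫₀ᵗ D` there, and Grönwall's inequality gives `D = 0`.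
Radial symmetry spreads `Φ₁ = Φ₂` on `[0, ∞)` to all of `ℝⁿ`.
-/

open Set intervalIntegral

section LineDerivatives

variable {E F : Type*} [NormedAddCommGroup E] [NormedSpace ℝ E] [NormedAddCommGroup F]
  [NormedSpace ℝ F]

theorem hasDerivAt_comp_add_smul {v : E → F} (hv : Differentiable ℝ v) (x w : E) (t : ℝ) :
    HasDerivAt (fun s : ℝ => v (x + s • w)) (fderiv ℝ v (x + t • w) w) t := by
  have hline : HasDerivAt (fun s : ℝ => x + s • w) w t := by
    simpa using ((hasDerivAt_id t).smul_const w).const_add x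
  exact (hv _).hasFDerivAt.comp_hasDerivAt t hline

theorem fderiv_fderiv_apply_eq_deriv_deriv {v : E → F} (hv : ContDiff ℝ 2 v) (x w : E) :
    fderiv ℝ (fun y => fderiv ℝ v y w) x w = deriv (deriv (fun s : ℝ => v (x + s • w))) 0 := by
  have hv' : Differentiable ℝ fun y => fderiv ℝ v y w :=
    ((hv.fderiv_right (m := 1) (by norm_num)).clm_apply contDiff_const).differentiable
      one_ne_zero
  have h1 : deriv (fun s : ℝ => v (x + s • w)) = fun s => fderiv ℝ v (x + s • w) w :=
    funext fun s => (hasDerivAt_comp_add_smul (hv.differentiable two_ne_zero) x w s).deriv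
  rw [h1, (hasDerivAt_comp_add_smul hv' x w 0).deriv, zero_smul, add_zero]

end LineDerivatives

theorem deriv_zero_of_even {f : ℝ → ℝ} (hf : ∀ t, f (-t) = f t) : deriv f 0 = 0 := by
  have h := deriv_comp_neg (f := f) (x := 0)
  rw [funext hf, neg_zero] at h
  linarith

theorem deriv_deriv_comp_sqrt_sq_add_sq {Φ : ℝ → ℝ} (hΦ : ContDiff ℝ 2 Φ) {r : ℝ} (hr : 0 < r) :
    deriv (deriv (fun s : ℝ => Φ (√(r ^ 2 + s ^ 2)))) 0 = deriv Φ r / r := by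
  have hρ : ∀ s : ℝ, HasDerivAt (fun s : ℝ => √(r ^ 2 + s ^ 2)) (s / √(r ^ 2 + s ^ 2)) s := by
    intro s
    have hsq : HasDerivAt (fun s : ℝ => r ^ 2 + s ^ 2) (2 * s) s := by
      simpa using (hasDerivAt_pow 2 s).const_add (r ^ 2)
    convert (hsq.sqrt (by positivity)) using 1
    field_simp
  have hρ0 : √(r ^ 2 + 0 ^ 2) = r := by simp [Real.sqrt_sq hr.le]
  have hd1 : deriv (fun s : ℝ => Φ (√(r ^ 2 + s ^ 2)))
      = fun s => deriv Φ (√(r ^ 2 + s ^ 2)) / √(r ^ 2 + s ^ 2) * s := by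
    funext s
    exact ((hΦ.differentiable two_ne_zero _).hasDerivAt.comp s (hρ s)).deriv.trans (by ring)
  have hquot : DifferentiableAt ℝ (fun s : ℝ => deriv Φ (√(r ^ 2 + s ^ 2)) / √(r ^ 2 + s ^ 2)) 0 :=
    ((hΦ.differentiable_deriv_two _).comp 0 (hρ 0).differentiableAt).div
      (hρ 0).differentiableAt (by rw [hρ0]; exact hr.ne')
  rw [hd1, (hquot.hasDerivAt.fun_mul (hasDerivAt_id' 0)).deriv]
  simp [Real.sqrt_sq hr.le]

theorem EuclideanSpace.norm_smul_single_add_smul_single {n : ℕ} {i j : Fin n} (hij : j ≠ i)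
    (r s : ℝ) :
    ‖r • EuclideanSpace.single i (1 : ℝ) + s • EuclideanSpace.single j (1 : ℝ)‖
      = √(r ^ 2 + s ^ 2) := by
  rw [← Real.sqrt_sq (norm_nonneg _), norm_add_sq_real, real_inner_smul_left,
    real_inner_smul_right, EuclideanSpace.inner_single_left]
  simp [norm_smul, hij]

section Radial

variable {n : ℕ}

def profile (u : Euc n → ℝ) (i : Fin n) (t : ℝ) : ℝ :=
  u (t • EuclideanSpace.single i 1)

theorem IsRadial.eq_profile_norm {u : Euc n → ℝ} (hu : IsRadial u) (i : Fin n)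
    (x : Euc n) : u x = profile u i ‖x‖ :=
  hu _ _ (by simp [norm_smul])

theorem IsRadial.profile_neg {u : Euc n → ℝ} (hu : IsRadial u) (i : Fin n) (t : ℝ) :
    profile u i (-t) = profile u i t :=
  hu _ _ (by simp [norm_smul])

theorem IsRadial.rpow {u : Euc n → ℝ} (hu : IsRadial u) (m : ℝ) :
    IsRadial fun y => u y ^ m :=
  fun x y h => congrArg (· ^ m) (hu x y h)

theorem ContDiff.profile {k : WithTop ℕ∞} {u : Euc n → ℝ} (hu : ContDiff ℝ k u)
    (i : Fin n) : ContDiff ℝ k (profile u i) :=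
  hu.comp (contDiff_id.smul contDiff_const)

theorem IsRadial.lap_smul_single {v : Euc n → ℝ} (hv : ContDiff ℝ 2 v)
    (hrad : IsRadial v) (i : Fin n) {r : ℝ} (hr : 0 < r) :
    lap v (r • EuclideanSpace.single i 1)
      = deriv (deriv (profile v i)) r + ((n : ℝ) - 1) * (deriv (profile v i) r / r) := by
  have hterm : ∀ j : Fin n,
      fderiv ℝ (fun y => fderiv ℝ v y (EuclideanSpace.single j 1)) (r • EuclideanSpace.single i 1)
        (EuclideanSpace.single j 1)
      = if j = i then deriv (deriv (profile v i)) r else deriv (profile v i) r / r := by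
    intro j
    rw [fderiv_fderiv_apply_eq_deriv_deriv hv]
    split_ifs with hji
    · subst hji
      have hshift : deriv (fun s : ℝ =>
            v (r • EuclideanSpace.single j 1 + s • EuclideanSpace.single j 1))
          = fun s => deriv (profile v j) (r + s) := by
        funext s
        simp_rw [← add_smul]
        exact deriv_comp_const_add (profile v j) r s
      rw [hshift, deriv_comp_const_add, add_zero]
    · have hsqrt : (fun s : ℝ => v (r • EuclideanSpace.single i 1 + s • EuclideanSpace.single j 1))
          = fun s => profile v i √(r ^ 2 + s ^ 2) := by
        funext s
        apply hrad
        rw [EuclideanSpace.norm_smul_single_add_smul_single hji]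
        simp [norm_smul, abs_of_nonneg (Real.sqrt_nonneg _)]
      rw [hsqrt]
      exact deriv_deriv_comp_sqrt_sq_add_sq (hv.profile i) hr
  have hn : 1 ≤ n := Fin.pos i
  rw [lap, Finset.sum_congr rfl fun j _ => hterm j, Finset.sum_ite, Finset.filter_eq',
    Finset.filter_ne']
  simp [Finset.card_erase_of_mem, Nat.cast_sub hn]

end Radial

/-- The point `p = (t, Φ, Φ')` encodes `Φ = φ ^ m`, for which
`β t φ' + γ φ = (β t Φ ^ (m⁻¹ - 1) Φ' + m γ Φ ^ m⁻¹) / m`. -/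
def solitonRHS (n : ℕ) (m β γ : ℝ) (p : ℝ × ℝ × ℝ) : ℝ :=
  -(β * p.1 * p.2.1 ^ (m⁻¹ - 1) * p.2.2 + m * γ * p.2.1 ^ m⁻¹) / (n - 1)

theorem contDiffOn_solitonRHS (n : ℕ) (m β γ : ℝ) :
    ContDiffOn ℝ 1 (solitonRHS n m β γ) (univ ×ˢ Ioi 0 ×ˢ univ) := by
  have hne : ∀ p ∈ (univ ×ˢ Ioi 0 ×ˢ univ : Set (ℝ × ℝ × ℝ)), p.2.1 ≠ 0 :=
    fun p hp => (mem_Ioi.1 hp.2.1).ne'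
  unfold solitonRHS
  fun_prop (disch := assumption)

theorem inner_gradient_self {E : Type*} [NormedAddCommGroup E] [InnerProductSpace ℝ E]
    [CompleteSpace E] (u : E → ℝ) (x : E) : ⟪x, gradient u x⟫ = fderiv ℝ u x x := by
  rw [real_inner_comm]
  exact InnerProductSpace.toDual_symm_apply

theorem YamabePDE.hasDerivAt_pow_mul_deriv_profile {n : ℕ} {m β γ : ℝ} {u : Euc n → ℝ}
    (hpde : YamabePDE m β γ u) (hn : 2 ≤ n) (hm : m ≠ 0) (hpos : ∀ x, 0 < u x)
    (hu : ContDiff ℝ 2 u) (hrad : IsRadial u) (i : Fin n) {r : ℝ} (hr : 0 < r) :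
    HasDerivAt (fun t => t ^ (n - 1) * deriv (profile (fun y => u y ^ m) i) t)
      (r ^ (n - 1) * solitonRHS n m β γ (r, profile (fun y => u y ^ m) i r,
        deriv (profile (fun y => u y ^ m) i) r)) r := by
  set Φ := profile (fun y => u y ^ m) i
  have hv : ContDiff ℝ 2 fun y => u y ^ m := hu.rpow_const_of_ne fun x => (hpos x).ne'
  have hΦ : ContDiff ℝ 2 Φ := hv.profile i
  have hφ : profile u i = fun t => Φ t ^ m⁻¹ :=
    funext fun t => (Real.rpow_rpow_inv (hpos _).le hm).symm
  have hdφ : deriv (profile u i) r = deriv Φ r * m⁻¹ * Φ r ^ (m⁻¹ - 1) := by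
    rw [hφ]
    exact ((hΦ.differentiable two_ne_zero r).hasDerivAt.rpow_const
      (Or.inl (Real.rpow_pos_of_pos (hpos _) m).ne')).deriv
  have hinner : ⟪r • EuclideanSpace.single i 1, gradient u (r • EuclideanSpace.single i 1)⟫
      = r * deriv (profile u i) r := by
    have hline := hasDerivAt_comp_add_smul (hu.differentiable two_ne_zero) 0
      (EuclideanSpace.single i 1) r
    simp only [zero_add] at hline
    rw [inner_gradient_self, map_smul, smul_eq_mul, ← hline.deriv]
    rfl
  have hode := hpde (r • EuclideanSpace.single i 1)
  rw [(hrad.rpow m).lap_smul_single hv i hr, hinner, hdφ] at hode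
  obtain ⟨N, rfl⟩ : ∃ N, n = N + 2 := ⟨n - 2, by omega⟩
  have hprod := ((hasDerivAt_pow (N + 1) r).mul
    (hΦ.differentiable_deriv_two r).hasDerivAt)
  rw [show u (r • EuclideanSpace.single i 1) = Φ r ^ m⁻¹ from congrFun hφ r] at hode
  refine hprod.congr_deriv ?_
  rw [show N + 2 - 1 = N + 1 from rfl, Nat.add_sub_cancel, solitonRHS]
  push_cast at hode ⊢
  generalize Φ r ^ (m⁻¹ - 1) = A, Φ r ^ m⁻¹ = B, deriv Φ r = d₁, deriv (deriv Φ) r = d₂ at hode ⊢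
  have hN : (N : ℝ) + 2 - 1 = N + 1 := by ring
  rw [hN] at hode ⊢
  have hN1 : (N : ℝ) + 1 ≠ 0 := by positivity
  field_simp at hode
  rw [pow_succ, mul_div_assoc', eq_div_iff hN1]
  linear_combination (r ^ N) * hode

theorem eqOn_zero_of_le_mul_integral {D : ℝ → ℝ} {K R : ℝ} (hD : Continuous D)
    (hD0 : ∀ t ∈ Icc 0 R, 0 ≤ D t) (hle : ∀ t ∈ Icc 0 R, D t ≤ K * ∫ τ in 0..t, D τ) :
    EqOn D 0 (Icc 0 R) := by
  set I : ℝ → ℝ := fun t => ∫ τ in 0..t, D τ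
  have hI : ∀ t, HasDerivAt I (D t) t := fun t =>
    integral_hasDerivAt_right (hD.intervalIntegrable 0 t) (hD.stronglyMeasurableAtFilter _ _)
      hD.continuousAt
  have hI0 : ∀ t ∈ Icc 0 R, I t = 0 :=
    eq_zero_of_abs_deriv_le_mul_abs_self_of_eq_zero_right (K := K)
      (fun t _ => (hI t).continuousAt.continuousWithinAt) (fun t _ => (hI t).hasDerivWithinAt)
      integral_same fun t ht => by
        have hInn : 0 ≤ I t := integral_nonneg ht.1 fun τ hτ => hD0 τ ⟨hτ.1, hτ.2.trans ht.2.le⟩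
        rw [Real.norm_of_nonneg (hD0 t (Ico_subset_Icc_self ht)), Real.norm_of_nonneg hInn]
        exact hle t (Ico_subset_Icc_self ht)
  intro t ht
  have h := hle t ht
  rw [show (∫ τ in 0..t, D τ) = 0 from hI0 t ht, mul_zero] at h
  exact le_antisymm h (hD0 t ht)

theorem abs_le_integral_abs_of_hasDerivAt_pow_mul {N : ℕ} {z g : ℝ → ℝ} (hz : Continuous z)
    (hg : Continuous g) (hz0 : z 0 = 0)
    (hode : ∀ r > 0, HasDerivAt (fun t => t ^ N * z t) (r ^ N * g r) r) {t : ℝ} (ht : 0 ≤ t) :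
    |z t| ≤ ∫ τ in 0..t, |g τ| := by
  rcases ht.eq_or_lt with rfl | ht
  · simp [hz0]
  have hFTC : ∫ τ in 0..t, τ ^ N * g τ = t ^ N * z t := by
    rw [integral_eq_sub_of_hasDerivAt_of_le ht.le (by fun_prop) (fun r hr => hode r hr.1)
      (by apply Continuous.intervalIntegrable; fun_prop), hz0, mul_zero, sub_zero]
  have htN : 0 < t ^ N := pow_pos ht N
  refine le_of_mul_le_mul_left ?_ htN
  calc t ^ N * |z t| = |∫ τ in 0..t, τ ^ N * g τ| := by
        rw [hFTC, abs_mul, abs_of_pos htN]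
    _ ≤ ∫ τ in 0..t, |τ ^ N * g τ| := abs_integral_le_integral_abs ht.le
    _ ≤ ∫ τ in 0..t, t ^ N * |g τ| := by
        refine integral_mono_on ht.le (by apply Continuous.intervalIntegrable; fun_prop)
          (by apply Continuous.intervalIntegrable; fun_prop) fun τ hτ => ?_
        rw [abs_mul, abs_of_nonneg (pow_nonneg hτ.1 N)]
        gcongr
        exacts [hτ.1, hτ.2]
    _ = t ^ N * ∫ τ in 0..t, |g τ| := intervalIntegral.integral_const_mul _ _

theorem eqOn_zero_of_hasDerivAt_pow_mul_of_abs_le {N : ℕ} {L R : ℝ} {y y' g : ℝ → ℝ}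
    (hy : ∀ t, HasDerivAt y (y' t) t) (hy' : Continuous y') (hg : Continuous g)
    (hode : ∀ r > 0, HasDerivAt (fun t => t ^ N * y' t) (r ^ N * g r) r)
    (h0 : y 0 = 0) (h0' : y' 0 = 0)
    (hbound : ∀ t ∈ Icc 0 R, |g t| ≤ L * (|y t| + |y' t|)) :
    EqOn y 0 (Icc 0 R) := by
  have hycont : Continuous y := continuous_iff_continuousAt.2 fun t => (hy t).continuousAt
  set D : ℝ → ℝ := fun t => |y t| + |y' t|
  have hD : Continuous D := by fun_prop
  have hDle : ∀ t ∈ Icc 0 R, D t ≤ (1 + L) * ∫ τ in 0..t, D τ := by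
    intro t ht
    have hyt := abs_le_integral_abs_of_hasDerivAt_pow_mul (N := 0) hycont hy' h0
      (fun r _ => by simpa using hy r) ht.1
    have hy't := abs_le_integral_abs_of_hasDerivAt_pow_mul hy' hg h0' hode ht.1
    have hint : IntervalIntegrable D MeasureTheory.volume 0 t := hD.intervalIntegrable 0 t
    have h1 : ∫ τ in 0..t, |y' τ| ≤ ∫ τ in 0..t, D τ :=
      integral_mono_on ht.1 (by apply Continuous.intervalIntegrable; fun_prop) hint
        fun τ _ => le_add_of_nonneg_left (abs_nonneg _)
    have h2 : ∫ τ in 0..t, |g τ| ≤ ∫ τ in 0..t, L * D τ :=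
      integral_mono_on ht.1 (by apply Continuous.intervalIntegrable; fun_prop)
        (hint.const_mul L) fun τ hτ => hbound τ ⟨hτ.1, hτ.2.trans ht.2⟩
    rw [intervalIntegral.integral_const_mul] at h2
    simp only [D]
    linarith
  intro t ht
  have := eqOn_zero_of_le_mul_integral hD (fun t _ => by positivity) hDle ht
  simp only [D, Pi.zero_apply] at this ⊢
  exact abs_eq_zero.1 (le_antisymm (by linarith [abs_nonneg (y' t)]) (abs_nonneg _))

theorem ContDiffOn.exists_abs_sub_comp_le {E X : Type*} [NormedAddCommGroup E] [NormedSpace ℝ E]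
    [TopologicalSpace X] {F : E → ℝ} {U : Set E} (hU : Convex ℝ U) (hF : ContDiffOn ℝ 1 F U)
    {s : Set X} (hs : IsCompact s) {γ₁ γ₂ : X → E} (hγ₁ : Continuous γ₁) (hγ₂ : Continuous γ₂)
    (hγ₁U : ∀ x, γ₁ x ∈ U) (hγ₂U : ∀ x, γ₂ x ∈ U) :
    ∃ K : NNReal, ∀ x ∈ s, |F (γ₁ x) - F (γ₂ x)| ≤ K * ‖γ₁ x - γ₂ x‖ := by
  have hcpt : IsCompact (γ₁ '' s ∪ γ₂ '' s) := (hs.image hγ₁).union (hs.image hγ₂)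
  obtain ⟨K, hK⟩ := ((hF.locallyLipschitzOn hU).mono
    (union_subset (image_subset_iff.2 fun x _ => hγ₁U x) (image_subset_iff.2 fun x _ => hγ₂U x))
    ).exists_lipschitzOnWith_of_compact hcpt
  refine ⟨K, fun x hx => ?_⟩
  simpa [Real.dist_eq, dist_eq_norm] using
    hK.dist_le_mul _ (Or.inl (mem_image_of_mem _ hx)) _ (Or.inr (mem_image_of_mem _ hx))

theorem eqOn_Ici_of_radial_ode {N : ℕ} {F : ℝ × ℝ × ℝ → ℝ} {U : Set (ℝ × ℝ × ℝ)}
    (hU : Convex ℝ U) (hF : ContDiffOn ℝ 1 F U) {y₁ y₂ : ℝ → ℝ}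
    (hy₁ : ContDiff ℝ 1 y₁) (hy₂ : ContDiff ℝ 1 y₂)
    (hy₁U : ∀ t, (t, y₁ t, deriv y₁ t) ∈ U) (hy₂U : ∀ t, (t, y₂ t, deriv y₂ t) ∈ U)
    (hode₁ : ∀ r > 0, HasDerivAt (fun t => t ^ N * deriv y₁ t)
      (r ^ N * F (r, y₁ r, deriv y₁ r)) r)
    (hode₂ : ∀ r > 0, HasDerivAt (fun t => t ^ N * deriv y₂ t)
      (r ^ N * F (r, y₂ r, deriv y₂ r)) r)
    (h0 : y₁ 0 = y₂ 0) (h0' : deriv y₁ 0 = deriv y₂ 0) :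
    EqOn y₁ y₂ (Ici 0) := by
  intro R hR
  have hγ₁ : Continuous fun t => (t, y₁ t, deriv y₁ t) := by
    have := hy₁.continuous_deriv le_rfl; fun_prop
  have hγ₂ : Continuous fun t => (t, y₂ t, deriv y₂ t) := by
    have := hy₂.continuous_deriv le_rfl; fun_prop
  obtain ⟨L, hL⟩ := hF.exists_abs_sub_comp_le hU isCompact_Icc hγ₁ hγ₂ hy₁U hy₂U (s := Icc 0 R)
  have hdiff := eqOn_zero_of_hasDerivAt_pow_mul_of_abs_le (N := N) (L := (L : ℝ)) (R := R)
    (y := y₁ - y₂) (y' := deriv y₁ - deriv y₂)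
    (g := fun t => F (t, y₁ t, deriv y₁ t) - F (t, y₂ t, deriv y₂ t))
    (fun t => ((hy₁.differentiable one_ne_zero t).hasDerivAt).sub
      (hy₂.differentiable one_ne_zero t).hasDerivAt)
    ((hy₁.continuous_deriv le_rfl).sub (hy₂.continuous_deriv le_rfl))
    ((hF.continuousOn.comp_continuous hγ₁ hy₁U).sub (hF.continuousOn.comp_continuous hγ₂ hy₂U))
    (fun r hr => by simpa only [Pi.sub_apply, mul_sub] using (hode₁ r hr).fun_sub (hode₂ r hr))
    (sub_eq_zero.2 h0) (sub_eq_zero.2 h0') (fun t ht => ?_) ⟨hR, le_rfl⟩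
  · exact sub_eq_zero.1 hdiff
  · refine (hL t ht).trans (mul_le_mul_of_nonneg_left ?_ L.2)
    simp [Prod.norm_def]

theorem radial_soliton_unique_general (n : ℕ) (hn : 3 ≤ n)
    (m β γ : ℝ)
    (hm : m = ((n : ℝ) - 2) / ((n : ℝ) + 2))
    (u₁ u₂ : Euc n → ℝ)
    (h₁pos : ∀ x, 0 < u₁ x) (h₁smooth : ContDiff ℝ (⊤ : ℕ∞) u₁)
    (h₁rad : IsRadial u₁) (h₁pde : YamabePDE m β γ u₁)
    (h₂pos : ∀ x, 0 < u₂ x) (h₂smooth : ContDiff ℝ (⊤ : ℕ∞) u₂)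
    (h₂rad : IsRadial u₂) (h₂pde : YamabePDE m β γ u₂)
    (h0 : u₁ 0 = u₂ 0) :
    u₁ = u₂ := by
  have hm0 : m ≠ 0 := by
    have : (3 : ℝ) ≤ n := by exact_mod_cast hn
    rw [hm]
    exact div_ne_zero (by linarith) (by linarith)
  have h₁C2 : ContDiff ℝ 2 u₁ := h₁smooth.of_le (WithTop.coe_le_coe.2 le_top)
  have h₂C2 : ContDiff ℝ 2 u₂ := h₂smooth.of_le (WithTop.coe_le_coe.2 le_top)
  let i : Fin n := ⟨0, by omega⟩
  have hprofile : EqOn (profile (fun y => u₁ y ^ m) i) (profile (fun y => u₂ y ^ m) i) (Ici 0) :=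
    eqOn_Ici_of_radial_ode (convex_univ.prod ((convex_Ioi 0).prod convex_univ))
      (contDiffOn_solitonRHS n m β γ)
      ((h₁C2.rpow_const_of_ne fun x => (h₁pos x).ne').profile i |>.of_le one_le_two)
      ((h₂C2.rpow_const_of_ne fun x => (h₂pos x).ne').profile i |>.of_le one_le_two)
      (fun t => ⟨trivial, Real.rpow_pos_of_pos (h₁pos _) m, trivial⟩)
      (fun t => ⟨trivial, Real.rpow_pos_of_pos (h₂pos _) m, trivial⟩)
      (fun r hr => h₁pde.hasDerivAt_pow_mul_deriv_profile (by omega) hm0 h₁pos h₁C2 h₁rad i hr)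
      (fun r hr => h₂pde.hasDerivAt_pow_mul_deriv_profile (by omega) hm0 h₂pos h₂C2 h₂rad i hr)
      (by simp [profile, h0])
      (by rw [deriv_zero_of_even ((h₁rad.rpow m).profile_neg i),
        deriv_zero_of_even ((h₂rad.rpow m).profile_neg i)])
  funext x
  rw [h₁rad.eq_profile_norm i x, h₂rad.eq_profile_norm i x]
  exact (Real.rpow_left_inj (h₁pos _).le (h₂pos _).le hm0).1 (hprofile (norm_nonneg x))

/-- radial Yamabe solitons are determined by the value at the origin. -/
theorem radial_soliton_unique (n : ℕ) (hn : 3 ≤ n)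
    (m ρ β γ : ℝ)
    (hm : m = ((n : ℝ) - 2) / ((n : ℝ) + 2))
    (hρ : ρ = 1 ∨ ρ = 0 ∨ ρ = -1)
    (hβ : 0 ≤ β)
    (hγ : γ = (2 * β + ρ) / (1 - m))
    (hγpos : 0 < γ)
    (u₁ u₂ : Euc n → ℝ)
    (h₁pos : ∀ x, 0 < u₁ x) (h₁smooth : ContDiff ℝ (⊤ : ℕ∞) u₁)
    (h₁rad : IsRadial u₁) (h₁pde : YamabePDE m β γ u₁)
    (h₂pos : ∀ x, 0 < u₂ x) (h₂smooth : ContDiff ℝ (⊤ : ℕ∞) u₂)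
    (h₂rad : IsRadial u₂) (h₂pde : YamabePDE m β γ u₂)
    (h0 : u₁ 0 = u₂ 0) :
    u₁ = u₂ :=
  radial_soliton_unique_general n hn m β γ hm u₁ u₂ h₁pos h₁smooth h₁rad h₁pde h₂pos h₂smooth h₂rad
    h₂pde h0
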